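/- Let F be a nonarchimedean local field, ψ an additive character of F trivial on the ring of integers O but nontrivial on p⁻¹. Fix m ≥ 1 and let J_m = d^m K^m d^{-m} as above, with Iwahori-type decomposition J_m = N̄_m A_m N_m where N_m = N_n ∩ J_m, A_m = A_n ∩ J_m, N̄_m = N̄_n ∩ J_m. Define ψ_m on J_m by ψ_m(j) = ψ(Σ_{i=1}^{n-1} (n_j)_{i,i+1}), where j = b̄_j n_j with b̄_j ∈ N̄_m A_m and n_j ∈ N_m. Then for all j ∈ J_m, ψ_m(ω_n ᵗj⁻¹ ω_n) = ψ_m(j)⁻¹. -/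

import Mathlib

open Matrix

/-- The `k × k` antidiagonal permutation matrix `ω_k`. -/
def antidiag (F : Type*) [Zero F] [One F] (k : ℕ) : Matrix (Fin k) (Fin k) F :=
  Matrix.of fun i j => if (i : ℕ) + (j : ℕ) = k - 1 then 1 else 0

/-- Upper triangular unipotent matrix. -/
def IsUpperUnip {F : Type*} [Zero F] [One F] {k : ℕ} (M : Matrix (Fin k) (Fin k) F) : Prop :=
  (∀ i j : Fin k, j < i → M i j = 0) ∧ ∀ i, M i i = 1

/-- `d^s` where `d = diag(1, p², p⁴, ..., p^{2n-2})`. -/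
noncomputable def dpow (p : ℕ) [Fact p.Prime] (n : ℕ) (s : ℤ) :
    Matrix (Fin n) (Fin n) ℚ_[p] :=
  Matrix.diagonal fun i => (p : ℚ_[p]) ^ (2 * (i : ℤ) * s)

/-- The principal congruence subgroup `K^m = I + M_n(p^m)`. -/
def Km (p : ℕ) [Fact p.Prime] (n m : ℕ) : Set (Matrix (Fin n) (Fin n) ℚ_[p]) :=
  {g | ∀ i j, ‖g i j - (1 : Matrix (Fin n) (Fin n) ℚ_[p]) i j‖ ≤ (p : ℝ) ^ (-(m : ℤ))}

/-- `J_m = d^m K^m d^{-m}`. -/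
noncomputable def Jm (p : ℕ) [Fact p.Prime] (n m : ℕ) :
    Set (Matrix (Fin n) (Fin n) ℚ_[p]) :=
  (fun k => dpow p n (m : ℤ) * k * dpow p n (-(m : ℤ))) '' Km p n m

/-!
The involution `A ↦ ω ᵗA ω` (reflection in the antidiagonal) reverses products and preserves
both lower triangular and upper unipotent matrices. Hence from `j = b̄₁ n₁` we get
`ω ᵗj⁻¹ ω = (ω ᵗb̄₁⁻¹ ω)(ω ᵗn₁⁻¹ ω)`, a (lower triangular)·(upper unipotent) factorisation, and
uniqueness of such factorisations gives `n₂ = ω ᵗn₁⁻¹ ω`; here `b̄₁` is invertible because its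
diagonal entries lie in `1 + p^m ℤ_p`. The superdiagonal of the inverse of a unipotent matrix is
the negated superdiagonal, and the reflection merely permutes the superdiagonal entries, so the
superdiagonal sums of `n₂` and `n₁` are opposite, and `ψ` turns negation into inversion.
-/

namespace Matrix

variable {ι R : Type*} [LinearOrder ι] [CommRing R]

theorem eq_one_of_isLowerTriangular_of_isUpperTriangular [DecidableEq ι] {D : Matrix ι ι R}
    (hL : D.IsLowerTriangular) (hU : D.IsUpperTriangular) (hD : ∀ i, D i i = 1) : D = 1 := by
  ext i j
  rcases lt_trichotomy i j with h | rfl | h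
  · rw [hL h, one_apply_ne h.ne]
  · rw [hD, one_apply_eq]
  · rw [hU h, one_apply_ne h.ne']

variable [Fintype ι]

theorem IsUpperTriangular.mul_apply_self {A B : Matrix ι ι R} (hA : A.IsUpperTriangular)
    (hB : B.IsUpperTriangular) (i : ι) : (A * B) i i = A i i * B i i := by
  rw [mul_apply, Finset.sum_eq_single i]
  · intro c _ hc
    rcases hc.lt_or_gt with h | h
    · rw [hA h, zero_mul]
    · rw [hB h, mul_zero]
  · simp

variable [DecidableEq ι]

theorem IsUpperTriangular.isUnit_det_of_diag_eq_one {U : Matrix ι ι R}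
    (hU : U.IsUpperTriangular) (hU₁ : ∀ i, U i i = 1) : IsUnit U.det := by
  simp [det_of_isUpperTriangular hU, hU₁]

theorem IsUpperTriangular.inv_of_diag_eq_one {U : Matrix ι ι R}
    (hU : U.IsUpperTriangular) (hU₁ : ∀ i, U i i = 1) : U⁻¹.IsUpperTriangular :=
  have := U.invertibleOfIsUnitDet (hU.isUnit_det_of_diag_eq_one hU₁)
  blockTriangular_inv_of_blockTriangular hU

theorem IsUpperTriangular.inv_apply_self_of_diag_eq_one {U : Matrix ι ι R}
    (hU : U.IsUpperTriangular) (hU₁ : ∀ i, U i i = 1) (i : ι) : U⁻¹ i i = 1 := by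
  have h := congr_fun₂ (mul_nonsing_inv U (hU.isUnit_det_of_diag_eq_one hU₁)) i i
  rwa [hU.mul_apply_self (hU.inv_of_diag_eq_one hU₁), hU₁, one_mul, one_apply_eq] at h

theorem IsUpperTriangular.inv_apply_of_covBy {U : Matrix ι ι R}
    (hU : U.IsUpperTriangular) (hU₁ : ∀ i, U i i = 1) {i j : ι} (hij : i ⋖ j) :
    U⁻¹ i j = -U i j := by
  have hinv := hU.inv_of_diag_eq_one hU₁
  have h := congr_fun₂ (mul_nonsing_inv U (hU.isUnit_det_of_diag_eq_one hU₁)) i j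
  rw [mul_apply, one_apply_ne hij.lt.ne, Finset.sum_eq_add i j hij.lt.ne] at h
  · rw [hU₁, hU.inv_apply_self_of_diag_eq_one hU₁, one_mul, mul_one] at h
    linear_combination h
  · intro c _ ⟨hci, hcj⟩
    rcases lt_or_ge c i with h | h
    · rw [hU h, zero_mul]
    · have : j < c := lt_of_not_ge fun h' => (hij.eq_or_eq h h').elim hci hcj
      rw [hinv this, mul_zero]
  all_goals simp

theorem IsUpperTriangular.eq_of_lowerTriangular_mul_eq {L L' U U' : Matrix ι ι R}
    (hL : L.IsLowerTriangular) (hL' : L'.IsLowerTriangular) (hL'det : IsUnit L'.det)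
    (hU : U.IsUpperTriangular) (hU₁ : ∀ i, U i i = 1)
    (hU' : U'.IsUpperTriangular) (hU'₁ : ∀ i, U' i i = 1)
    (h : L * U = L' * U') : U = U' := by
  have := L'.invertibleOfIsUnitDet hL'det
  have hUdet := hU.isUnit_det_of_diag_eq_one hU₁
  have hD : L'⁻¹ * L = U' * U⁻¹ := by
    rw [← inv_mul_cancel_left_of_invertible L' U', ← h, mul_assoc, mul_assoc,
      mul_nonsing_inv U hUdet, mul_one]
  have hUinv := hU.inv_of_diag_eq_one hU₁
  have hD₁ : U' * U⁻¹ = 1 := by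
    refine eq_one_of_isLowerTriangular_of_isUpperTriangular ?_ (hU'.mul hUinv) fun i => ?_
    · exact hD ▸ (blockTriangular_inv_of_blockTriangular hL').mul hL
    · rw [hU'.mul_apply_self hUinv, hU'₁, hU.inv_apply_self_of_diag_eq_one hU₁, one_mul]
  rw [← one_mul U, ← hD₁, mul_assoc, nonsing_inv_mul U hUdet, mul_one]

end Matrix

namespace Matrix

variable {R : Type*} {k : ℕ}

/-- The reflection `ω_k ᵗA ω_k` of `A` in the antidiagonal. -/
def antitranspose (A : Matrix (Fin k) (Fin k) R) : Matrix (Fin k) (Fin k) R :=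
  Aᵀ.submatrix Fin.revPerm Fin.revPerm

@[simp]
theorem antitranspose_apply (A : Matrix (Fin k) (Fin k) R) (i j : Fin k) :
    A.antitranspose i j = A j.rev i.rev :=
  rfl

theorem IsUpperTriangular.antitranspose [Zero R] {A : Matrix (Fin k) (Fin k) R}
    (hA : A.IsUpperTriangular) : A.antitranspose.IsUpperTriangular :=
  fun _ _ h => hA (Fin.rev_lt_rev.mpr h)

theorem IsLowerTriangular.antitranspose [Zero R] {A : Matrix (Fin k) (Fin k) R}
    (hA : A.IsLowerTriangular) : A.antitranspose.IsLowerTriangular :=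
  fun _ _ h => hA (Fin.rev_lt_rev.mpr h)

variable [CommRing R]

theorem antitranspose_mul (A B : Matrix (Fin k) (Fin k) R) :
    (A * B).antitranspose = B.antitranspose * A.antitranspose := by
  rw [antitranspose, transpose_mul, ← submatrix_mul_equiv _ _ _ Fin.revPerm _]
  rfl

theorem det_antitranspose (A : Matrix (Fin k) (Fin k) R) : A.antitranspose.det = A.det := by
  rw [antitranspose, det_submatrix_equiv_self, det_transpose]

end Matrix

theorem antidiag_eq_permMatrix {R : Type*} [Zero R] [One R] {k : ℕ} :
    antidiag R k = Fin.revPerm.permMatrix R := by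
  ext i j
  simp only [antidiag, of_apply, PEquiv.toMatrix_apply, Equiv.toPEquiv_apply, Option.mem_def,
    Option.some.injEq, Fin.revPerm_apply, Fin.ext_iff, Fin.val_rev]
  congr 1
  apply propext
  omega

theorem antidiag_mul_transpose_mul_antidiag {R : Type*} [CommRing R] {k : ℕ}
    (A : Matrix (Fin k) (Fin k) R) :
    antidiag R k * Aᵀ * antidiag R k = A.antitranspose := by
  rw [antidiag_eq_permMatrix, PEquiv.toMatrix_toPEquiv_mul, PEquiv.mul_toMatrix_toPEquiv]
  rfl

theorem IsUpperUnip.isUpperTriangular {R : Type*} [Zero R] [One R] {k : ℕ}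
    {M : Matrix (Fin k) (Fin k) R} (h : IsUpperUnip M) : M.IsUpperTriangular :=
  fun i j hij => h.1 i j hij

def superdiagSum {R : Type*} [AddCommMonoid R] {n : ℕ} (M : Matrix (Fin n) (Fin n) R) : R :=
  ∑ i : Fin (n - 1), M ⟨i.1, by omega⟩ ⟨i.1 + 1, by omega⟩

theorem superdiagSum_antitranspose {R : Type*} [AddCommMonoid R] {n : ℕ}
    (M : Matrix (Fin n) (Fin n) R) : superdiagSum M.antitranspose = superdiagSum M := by
  rw [superdiagSum, ← Equiv.sum_comp Fin.revPerm, superdiagSum]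
  refine Fintype.sum_congr _ _ fun i => ?_
  simp only [antitranspose_apply, Fin.revPerm_apply]
  congr 1 <;> ext <;> simp only [Fin.val_rev] <;> omega

theorem superdiagSum_inv_of_isUpperUnip {R : Type*} [CommRing R] {n : ℕ}
    {M : Matrix (Fin n) (Fin n) R} (hM : IsUpperUnip M) :
    superdiagSum M⁻¹ = -superdiagSum M := by
  rw [superdiagSum, superdiagSum, ← Finset.sum_neg_distrib]
  refine Fintype.sum_congr _ _ fun i => hM.isUpperTriangular.inv_apply_of_covBy hM.2 ?_
  rw [Fin.covBy_iff]
  exact Order.covBy_add_one _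

theorem apply_self_ne_zero_of_mem_Jm {p : ℕ} [hp : Fact p.Prime] {n m : ℕ} (hm : 1 ≤ m)
    {x : Matrix (Fin n) (Fin n) ℚ_[p]} (hx : x ∈ Jm p n m) (i : Fin n) : x i i ≠ 0 := by
  obtain ⟨g, hg, rfl⟩ := hx
  have hp0 : (p : ℚ_[p]) ≠ 0 := Nat.cast_ne_zero.mpr hp.out.ne_zero
  have hdiag : (dpow p n m * g * dpow p n (-m)) i i = g i i := by
    simp only [dpow, mul_diagonal, diagonal_mul]
    rw [mul_right_comm, ← zpow_add₀ hp0, mul_neg, add_neg_cancel, zpow_zero, one_mul]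
  have hnorm : ‖g i i - 1‖ < 1 := by
    have := hg i i
    rw [one_apply_eq] at this
    refine this.trans_lt (zpow_lt_one_of_neg₀ ?_ (by omega))
    exact_mod_cast hp.out.one_lt
  show (dpow p n m * g * dpow p n (-m)) i i ≠ 0
  rw [hdiag]
  intro h0
  rw [h0, zero_sub, norm_neg, norm_one] at hnorm
  exact hnorm.false

/-- If `j = b̄₁ n₁` and `ω_n ᵗj⁻¹ ω_n = b̄₂ n₂` are the Iwahori decompositions
(`b̄ᵢ ∈ B̄_m` lower triangular in `J_m`, `nᵢ ∈ N_m` upper unipotent in `J_m`),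
then `ψ_m(ω_n ᵗj⁻¹ ω_n) = ψ_m(j)⁻¹`, where `ψ_m` is evaluated via the superdiagonal
sum of the `N_m`-component and `ψ` is an additive character with conductor `ℤ_p`. -/
theorem stmt_7 (p : ℕ) [Fact p.Prime] (n m : ℕ) (hm : 1 ≤ m)
    (ψ : AddChar ℚ_[p] ℂ)
    (j b₁ n₁ b₂ n₂ : Matrix (Fin n) (Fin n) ℚ_[p])
    (hb₁ : b₁ ∈ Jm p n m) (hb₁low : ∀ i k : Fin n, i < k → b₁ i k = 0)
    (hn₁up : IsUpperUnip n₁)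
    (hdec₁ : j = b₁ * n₁)
    (hb₂low : ∀ i k : Fin n, i < k → b₂ i k = 0)
    (hn₂up : IsUpperUnip n₂)
    (hdec₂ : antidiag ℚ_[p] n * (j⁻¹)ᵀ * antidiag ℚ_[p] n = b₂ * n₂) :
    ψ (∑ i : Fin (n - 1), n₂ ⟨i.1, by omega⟩ ⟨i.1 + 1, by omega⟩) =
      (ψ (∑ i : Fin (n - 1), n₁ ⟨i.1, by omega⟩ ⟨i.1 + 1, by omega⟩))⁻¹ := by
  have hb₁L : b₁.IsLowerTriangular := fun i k h => hb₁low i k h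
  have hb₁det : IsUnit b₁.det := by
    rw [det_of_isLowerTriangular b₁ hb₁L, isUnit_iff_ne_zero, Finset.prod_ne_zero_iff]
    exact fun i _ => apply_self_ne_zero_of_mem_Jm hm hb₁ i
  have := b₁.invertibleOfIsUnitDet hb₁det
  have hb₁inv : b₁⁻¹.IsLowerTriangular := blockTriangular_inv_of_blockTriangular hb₁L
  have hfactor : b₂ * n₂ = b₁⁻¹.antitranspose * n₁⁻¹.antitranspose := by
    rw [← hdec₂, antidiag_mul_transpose_mul_antidiag, hdec₁, Matrix.mul_inv_rev, antitranspose_mul]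
  have hn₁inv := hn₁up.isUpperTriangular.inv_of_diag_eq_one hn₁up.2
  have hn₂eq : n₂ = n₁⁻¹.antitranspose :=
    IsUpperTriangular.eq_of_lowerTriangular_mul_eq (fun i k h => hb₂low i k h)
      hb₁inv.antitranspose
      (det_antitranspose b₁⁻¹ ▸ isUnit_nonsing_inv_det b₁ hb₁det)
      hn₂up.isUpperTriangular hn₂up.2 hn₁inv.antitranspose
      (fun i => hn₁up.isUpperTriangular.inv_apply_self_of_diag_eq_one hn₁up.2 i.rev) hfactor
  change ψ (superdiagSum n₂) = (ψ (superdiagSum n₁))⁻¹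
  rw [hn₂eq, superdiagSum_antitranspose, superdiagSum_inv_of_isUpperUnip hn₁up,
    AddChar.map_neg_eq_inv]
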